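/- arXiv:math/0603100 — 3 statements merged into one kernel-verified Lean document; each statement's English description precedes it below -/
import Mathlib

section
/- Let 0 ≤ j ≤ t−1 and 1 ≤ ℓ ≤ p−1, and let f = ∏_{i=1}^m x_i^{a_i} y_i^{b_i} be a basis monomial (0 ≤ a_i, b_i ≤ q−1), with a_{1j} the j-th p-adic digit of a₁. Then, as an equality of functions V → k: Σ_{μ ∈ kˣ} μ^{ℓp^j}·(f ∘ τ_{μ⁻¹}) = 0 if a_{1j} < ℓ, and Σ_{μ ∈ kˣ} μ^{ℓp^j}·(f ∘ τ_{μ⁻¹}) = −C(a_{1j}, ℓ)·x₁^{a₁−ℓp^j} y₁^{b₁+ℓp^j} ∏_{i=2}^m x_i^{a_i} y_i^{b_i} if a_{1j} ≥ ℓ, where the binomial coefficient C(a_{1j}, ℓ) is reduced into F_p ⊆ k. -/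
open scoped Classical

noncomputable section

/-- The `2m`-dimensional standard symplectic space over `F_q = GaloisField p t`:
pairs `(x, y)` of `m`-tuples; `x_i(v) = v.1 i`, `y_i(v) = v.2 i` (indices from `0`). -/
abbrev SympV (p t m : ℕ) [Fact p.Prime] : Type :=
  (Fin m → GaloisField p t) × (Fin m → GaloisField p t)

noncomputable instance (p t : ℕ) [Fact p.Prime] : Fintype (GaloisField p t) :=
  Fintype.ofFinite _

/-- The basis monomial `∏_i x_i^{a_i} y_i^{b_i}` as a function `V → k`. -/
def bmono {p t m : ℕ} [Fact p.Prime] (a b : Fin m → ℕ) :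
    SympV p t m → GaloisField p t :=
  fun v => ∏ i, (v.1 i ^ a i * v.2 i ^ b i)

/-- The symplectic transvection `τ_ν(v) = v + ν·y₁(v)·e₁`; the substitution
`f ↦ f ∘ τ_ν` replaces `x₁` by `x₁ + ν y₁`. -/
def transv {p t m : ℕ} [Fact p.Prime] [NeZero m] (ν : GaloisField p t)
    (v : SympV p t m) : SympV p t m :=
  (Function.update v.1 0 (v.1 0 + ν * v.2 0), v.2)

/-! Expanding `(x + μ⁻¹ y)^a` binomially, the sum over `μ ∈ kˣ` of `μ^n μ^{-s}` vanishes unless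
`s = n` (where it is `q - 1 = -1`), because `n - s` is then a nonzero residue mod `q - 1`; only the
term `-C(a, n) x^{a-n} y^n` survives. For `n = ℓ p^j` with `ℓ < p`, Lucas' theorem reduces
`C(a, ℓ p^j)` mod `p` to `C(a_j, ℓ)` for the `j`-th digit `a_j` of `a`, which vanishes when
`a_j < ℓ`. -/

open Finset

theorem Choose.choose_mul_pow_modEq_choose_digit {p ℓ : ℕ} [Fact p.Prime] (hℓ : ℓ < p) :
    ∀ j n : ℕ, n.choose (ℓ * p ^ j) ≡ (n / p ^ j % p).choose ℓ [ZMOD p]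
  | 0, n => by
    simpa [Nat.mod_eq_of_lt hℓ, Nat.div_eq_of_lt hℓ] using
      Choose.choose_modEq_choose_mod_mul_choose_div (n := n) (k := ℓ) (p := p)
  | j + 1, n => by
    have hp : 0 < p := (Fact.out : p.Prime).pos
    have hdiv : ℓ * p ^ (j + 1) / p = ℓ * p ^ j := by
      rw [pow_succ, ← mul_assoc, Nat.mul_div_cancel _ hp]
    have hmod : ℓ * p ^ (j + 1) % p = 0 := by simp [pow_succ, ← mul_assoc]
    refine Choose.choose_modEq_choose_mod_mul_choose_div.trans ?_
    rw [hmod, hdiv, Nat.choose_zero_right, Nat.cast_one, one_mul, pow_succ', ←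
      Nat.div_div_eq_div_mul]
    exact Choose.choose_mul_pow_modEq_choose_digit hℓ j (n / p)

namespace FiniteField

variable {K : Type*} [Field K] [Fintype K]

theorem sum_units_pow_mul_inv_pow {n d : ℕ} (hn : 0 < n) (hnq : n < Fintype.card K - 1)
    (hd : d ≤ Fintype.card K - 1) :
    ∑ μ : Kˣ, (μ : K) ^ n * (μ : K)⁻¹ ^ d = if d = n then -1 else 0 := by
  set q := Fintype.card K
  have hinv : ∀ μ : Kˣ, (μ : K)⁻¹ ^ d = (μ : K) ^ (q - 1 - d) := fun μ => by
    rw [inv_pow, inv_eq_of_mul_eq_one_right]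
    rw [← pow_add, Nat.add_sub_cancel' hd, pow_card_sub_one_eq_one _ μ.ne_zero]
  simp_rw [hinv, ← pow_add, sum_pow_units]
  refine if_congr ⟨fun h => ?_, fun h => by rw [h, Nat.add_sub_cancel' hnq.le]⟩ rfl rfl
  have := Nat.eq_of_dvd_of_lt_two_mul (by omega) h (by omega)
  omega

theorem sum_units_pow_mul_add_inv_mul_pow {n a : ℕ} (hn : 0 < n) (hnq : n < Fintype.card K - 1)
    (ha : a ≤ Fintype.card K - 1) (x y : K) :
    ∑ μ : Kˣ, (μ : K) ^ n * (x + (μ : K)⁻¹ * y) ^ a =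
      if n ≤ a then -(a.choose n : K) * x ^ (a - n) * y ^ n else 0 := by
  calc ∑ μ : Kˣ, (μ : K) ^ n * (x + (μ : K)⁻¹ * y) ^ a
      = ∑ s ∈ range (a + 1), (∑ μ : Kˣ, (μ : K) ^ n * (μ : K)⁻¹ ^ s) *
          (y ^ s * x ^ (a - s) * a.choose s) := by
        simp_rw [add_comm x, add_pow, mul_sum, sum_mul]
        rw [sum_comm]
        refine sum_congr rfl fun s _ => sum_congr rfl fun μ _ => by ring
    _ = ∑ s ∈ range (a + 1), if s = n then -(y ^ s * x ^ (a - s) * a.choose s) else 0 := by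
        refine sum_congr rfl fun s hs => ?_
        rw [sum_units_pow_mul_inv_pow hn hnq ((mem_range_succ_iff.1 hs).trans ha)]
        split_ifs <;> ring
    _ = _ := by
        simp only [sum_ite_eq', mem_range_succ_iff]
        split_ifs <;> ring

theorem sum_units_pow_mul_add_inv_mul_pow_eq_digit {p : ℕ} [Fact p.Prime] [CharP K p]
    {ℓ j a : ℕ} (hℓ : 0 < ℓ) (hℓp : ℓ < p) (hnq : ℓ * p ^ j < Fintype.card K - 1)
    (ha : a ≤ Fintype.card K - 1) (x y : K) :
    ∑ μ : Kˣ, (μ : K) ^ (ℓ * p ^ j) * (x + (μ : K)⁻¹ * y) ^ a =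
      if a / p ^ j % p < ℓ then 0
      else -((a / p ^ j % p).choose ℓ : K) * x ^ (a - ℓ * p ^ j) * y ^ (ℓ * p ^ j) := by
  have hp : 0 < p := (Fact.out : p.Prime).pos
  have hlucas : (a.choose (ℓ * p ^ j) : K) = ((a / p ^ j % p).choose ℓ : K) := by
    exact_mod_cast (CharP.intCast_eq_intCast K p).2
      (Choose.choose_mul_pow_modEq_choose_digit hℓp j a)
  rw [sum_units_pow_mul_add_inv_mul_pow (Nat.mul_pos hℓ (pow_pos hp j)) hnq ha, hlucas]
  split_ifs with hle hdigit hdigit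
  · rw [Nat.choose_eq_zero_of_lt hdigit]
    simp
  · rfl
  · rfl
  · exact absurd ((Nat.le_div_iff_mul_le (pow_pos hp j)).1
      ((not_lt.1 hdigit).trans (Nat.mod_le _ _))) hle

end FiniteField

theorem Nat.mul_pow_lt_pow_sub_one {p ℓ j t : ℕ} (hp : 2 ≤ p) (hℓ : ℓ < p) (hj : j ≤ t - 1)
    (ht : 1 < t) : ℓ * p ^ j < p ^ t - 1 := by
  have h1 : ℓ * p ^ j ≤ (p - 1) * p ^ (t - 1) :=
    Nat.mul_le_mul (by omega) (Nat.pow_le_pow_right (by omega) hj)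
  have h2 : p ≤ p ^ (t - 1) := Nat.le_self_pow (by omega) p
  have h3 : p ^ t = p * p ^ (t - 1) := by
    rw [← pow_succ']
    congr 1
    omega
  have h4 : (p - 1) * p ^ (t - 1) + p ^ (t - 1) = p * p ^ (t - 1) := by
    rw [← Nat.succ_mul, Nat.succ_eq_add_one, Nat.sub_add_cancel (by omega)]
  omega

section Monomial

variable {p t m : ℕ} [Fact p.Prime]

theorem bmono_eq_mul_prod_compl (a b : Fin m → ℕ) (v : SympV p t m) (i : Fin m) :
    bmono a b v = v.1 i ^ a i * v.2 i ^ b i * ∏ k ∈ {i}ᶜ, v.1 k ^ a k * v.2 k ^ b k :=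
  Fintype.prod_eq_mul_prod_compl i _

theorem bmono_update (a b : Fin m → ℕ) (v : SympV p t m) (i : Fin m) (α β : ℕ) :
    bmono (Function.update a i α) (Function.update b i β) v =
      v.1 i ^ α * v.2 i ^ β * ∏ k ∈ {i}ᶜ, v.1 k ^ a k * v.2 k ^ b k := by
  rw [bmono_eq_mul_prod_compl _ _ _ i]
  refine congr_arg₂ _ (by simp) (prod_congr rfl fun k hk => ?_)
  rw [Function.update_of_ne (by simpa using hk), Function.update_of_ne (by simpa using hk)]

theorem bmono_transv [NeZero m] (a b : Fin m → ℕ) (ν : GaloisField p t) (v : SympV p t m) :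
    bmono a b (transv ν v) =
      (v.1 0 + ν * v.2 0) ^ a 0 * v.2 0 ^ b 0 * ∏ k ∈ {0}ᶜ, v.1 k ^ a k * v.2 k ^ b k := by
  rw [bmono_eq_mul_prod_compl _ _ _ 0]
  refine congr_arg₂ _ (by simp [transv]) (prod_congr rfl fun k hk => ?_)
  dsimp only [transv]
  rw [Function.update_of_ne (by simpa using hk)]

end Monomial

theorem shift_operator_general (p t m : ℕ) [Fact p.Prime] [NeZero m]
    (ht : 1 < t)
    (j ℓ : ℕ) (hj : j ≤ t - 1) (hl1 : 1 ≤ ℓ) (hl2 : ℓ ≤ p - 1)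
    (a b : Fin m → ℕ) (ha : ∀ i, a i ≤ p ^ t - 1) :
    (∑ μ : (GaloisField p t)ˣ,
        ((μ : GaloisField p t) ^ (ℓ * p ^ j)) •
          (fun v => bmono a b (transv (((μ⁻¹ : (GaloisField p t)ˣ) : GaloisField p t)) v))) =
      if a 0 / p ^ j % p < ℓ then (0 : SympV p t m → GaloisField p t)
      else (-(((a 0 / p ^ j % p).choose ℓ : GaloisField p t))) •
        bmono (Function.update a 0 (a 0 - ℓ * p ^ j))
              (Function.update b 0 (b 0 + ℓ * p ^ j)) := by
  have hp : 2 ≤ p := (Fact.out : p.Prime).two_le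
  have hcard : Fintype.card (GaloisField p t) = p ^ t := by
    rw [← Nat.card_eq_fintype_card]
    exact GaloisField.card p t (by omega)
  have hsum := FiniteField.sum_units_pow_mul_add_inv_mul_pow_eq_digit (K := GaloisField p t)
    hl1 (by omega) (hcard ▸ Nat.mul_pow_lt_pow_sub_one hp (by omega) hj ht) (hcard ▸ ha 0)
  funext v
  simp only [Finset.sum_apply, Pi.smul_apply, smul_eq_mul, bmono_transv, Units.val_inv_eq_inv_val]
  simp only [← mul_assoc, ← Finset.sum_mul, hsum]
  split_ifs
  · rw [zero_mul, zero_mul, Pi.zero_apply]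
  · rw [Pi.smul_apply, smul_eq_mul, bmono_update, pow_add]
    ring

/-- Lemma (shift operators): for `0 ≤ j ≤ t−1`, `1 ≤ ℓ ≤ p−1` and a basis monomial
`f = ∏ x_i^{a_i} y_i^{b_i}`, the sum `Σ_{μ ∈ kˣ} μ^{ℓp^j}·(f ∘ τ_{μ⁻¹})` is `0` if the
`j`-th `p`-adic digit `a_{1j}` of `a₁` is `< ℓ`, and equals
`−C(a_{1j},ℓ)·x₁^{a₁−ℓp^j} y₁^{b₁+ℓp^j} ∏_{i≥2} x_i^{a_i} y_i^{b_i}` otherwise. -/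
theorem shift_operator (p t m : ℕ) [Fact p.Prime] [NeZero m]
    (hodd : Odd p) (ht : 1 < t) (hm : 2 ≤ m)
    (j ℓ : ℕ) (hj : j ≤ t - 1) (hl1 : 1 ≤ ℓ) (hl2 : ℓ ≤ p - 1)
    (a b : Fin m → ℕ) (ha : ∀ i, a i ≤ p ^ t - 1) (hb : ∀ i, b i ≤ p ^ t - 1) :
    (∑ μ : (GaloisField p t)ˣ,
        ((μ : GaloisField p t) ^ (ℓ * p ^ j)) •
          (fun v => bmono a b (transv (((μ⁻¹ : (GaloisField p t)ˣ) : GaloisField p t)) v))) =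
      if a 0 / p ^ j % p < ℓ then (0 : SympV p t m → GaloisField p t)
      else (-(((a 0 / p ^ j % p).choose ℓ : GaloisField p t))) •
        bmono (Function.update a 0 (a 0 - ℓ * p ^ j))
              (Function.update b 0 (b 0 + ℓ * p ^ j)) :=
  shift_operator_general p t m ht j ℓ hj hl1 hl2 a b ha

end
end

section
/- Let λ and μ be types for d with λ_{t−1} = μ_{t−1}, with H-types s and r respectively. Let d* ∈ {0,…,q−2} with d* ≡ d − λ_{t−1}p^{t−1} (mod q−1), and let s* and r* be the H-types for d* of λ* = (λ₀,…,λ_{t−2},0) and μ* = (μ₀,…,μ_{t−2},0) respectively. Then s_i ≤ r_i for all i if and only if s*_i ≤ r*_i for all i; that is, the map λ ↦ λ* induces an order isomorphism on the corresponding sets of H-types. -/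
noncomputable section

/-- The `j`-th `p`-adic digit of `d`. -/
def digitp (p d j : ℕ) : ℕ := d / p ^ j % p

/-!
The operator `s ↦ (p s_{j+1} - s_j)_j` on `ℚ^t` is injective: a kernel element satisfies
`g_j = p g_{j+1}`, hence `g_j = p^t g_j` after one turn around the cycle, so `g = 0`.
Subtracting the `H`-type equations, the digit terms cancel and the operator maps `r - s` to
`μ - λ` and `r* - s*` to `μ* - λ*`. These agree because `λ, μ` and `λ*, μ*` differ only in the
last entry, where `λ_{t-1} = μ_{t-1}`. Hence `r - s = r* - s*`, so the two orders agree.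
-/
section CyclicRecurrence

variable {t : ℕ} [NeZero t]

open Fin.NatCast in
theorem Fin.eq_pow_mul_add_of_eq_mul_succ {M : Type*} [Monoid M] {c : M} {g : Fin t → M}
    (h : ∀ j, g j = c * g (j + 1)) (n : ℕ) (j : Fin t) : g j = c ^ n * g (j + n) := by
  induction n generalizing j with
  | zero => simp
  | succ n ih =>
    rw [h j, ih (j + 1), pow_succ', mul_assoc, Nat.cast_succ, add_comm (n : Fin t), add_assoc]

open Fin.NatCast in
theorem Fin.eq_zero_of_eq_mul_succ {M : Type*} [MonoidWithZero M] [IsRightCancelMulZero M]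
    {c : M} (hc : c ^ t ≠ 1) {g : Fin t → M} (h : ∀ j, g j = c * g (j + 1)) : g = 0 := by
  funext j
  by_contra hj
  have hcycle := Fin.eq_pow_mul_add_of_eq_mul_succ h t j
  rw [Fin.natCast_self, add_zero] at hcycle
  exact hc ((mul_eq_right₀ hj).mp hcycle.symm)

theorem Fin.eq_of_mul_succ_sub_eq {R : Type*} [CommRing R] [IsDomain R] {c : R} (hc : c ^ t ≠ 1)
    {a b : Fin t → R} (h : ∀ j, c * a (j + 1) - a j = c * b (j + 1) - b j) : a = b := by
  refine sub_eq_zero.mp (Fin.eq_zero_of_eq_mul_succ hc fun j => ?_)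
  simp only [Pi.sub_apply]
  linear_combination -h j

end CyclicRecurrence

/-- If `λ, μ` are types for `d` with `λ_{t−1} = μ_{t−1}` and `H`-types `s, r`, and
`s*, r*` are the `H`-types for `d* ≡ d − λ_{t−1}p^{t−1} (mod q−1)` of
`λ* = (λ₀,…,λ_{t−2},0)` and `μ* = (μ₀,…,μ_{t−2},0)`, then `s ≤ r` pointwise iff
`s* ≤ r*` pointwise: the map `λ ↦ λ*` induces an order isomorphism. -/
theorem htype_order_iso (p t d : ℕ) [Fact p.Prime] [NeZero t]
    (ht : 1 < t)
    (lam mu : Fin t → ℤ)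
    (hlast : lam ⟨t - 1, by omega⟩ = mu ⟨t - 1, by omega⟩)
    (s r : Fin t → ℚ)
    (hs : ∀ j : Fin t, (lam j : ℚ) = p * s (j + 1) - s j + digitp p d (j : ℕ))
    (hr : ∀ j : Fin t, (mu j : ℚ) = p * r (j + 1) - r j + digitp p d (j : ℕ))
    (dstar : ℕ)
    (sstar rstar : Fin t → ℚ)
    (hsstar : ∀ j : Fin t,
      ((if (j : ℕ) = t - 1 then 0 else lam j : ℤ) : ℚ) =
        p * sstar (j + 1) - sstar j + digitp p dstar (j : ℕ))
    (hrstar : ∀ j : Fin t,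
      ((if (j : ℕ) = t - 1 then 0 else mu j : ℤ) : ℚ) =
        p * rstar (j + 1) - rstar j + digitp p dstar (j : ℕ)) :
    (∀ i, s i ≤ r i) ↔ (∀ i, sstar i ≤ rstar i) := by
  have htrunc_sub : ∀ j : Fin t, (mu j - lam j : ℚ) =
      ((if (j : ℕ) = t - 1 then 0 else mu j : ℤ) : ℚ) -
        ((if (j : ℕ) = t - 1 then 0 else lam j : ℤ) : ℚ) := by
    intro j
    split_ifs with hj
    · simp [show j = ⟨t - 1, by omega⟩ from Fin.ext hj, hlast]
    · ring
  have hpow : (p : ℚ) ^ t ≠ 1 :=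
    (one_lt_pow₀ (by exact_mod_cast (Fact.out : p.Prime).one_lt) (by omega)).ne'
  have hdiff : r - s = rstar - sstar := Fin.eq_of_mul_succ_sub_eq hpow fun j => by
    simp only [Pi.sub_apply]
    linear_combination hrstar j - hsstar j - hr j + hs j + htrunc_sub j
  refine forall_congr' fun i => ?_
  have hi := congrFun hdiff i
  simp only [Pi.sub_apply] at hi
  rw [← sub_nonneg, hi, sub_nonneg]

end
end

section
/- (i) If s'', s', s ∈ H[d] satisfy s''_j ≤ s'_j ≤ s_j for all j, then Z(s'',s) = Z(s'',s') ∩ Z(s',s). (ii) The relation ≤ on S[d] defined by (s',ε') ≤ (s,ε) iff s'_j ≤ s_j for all j and ε ∩ Z(s',s) = ε' ∩ Z(s',s) is reflexive, antisymmetric, and transitive, i.e., it is a partial order on S[d]. -/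
open scoped Classical

noncomputable section

/-- The type `λ` attached to a tuple `s` (for `d`): `λ_j = p·s_{j+1} − s_j + d_j`,
indices mod `t`. -/
def lamOf (p t d : ℕ) [NeZero t] (s : Fin t → ℤ) (j : Fin t) : ℤ :=
  (p : ℤ) * s (j + 1) - s j + digitp p d (j : ℕ)

/-- Membership in `H[d]`: `0 ≤ s_j ≤ 2m−1` and `0 ≤ λ_j ≤ 2m(p−1)` for all `j`. -/
def memHd (p t m d : ℕ) [NeZero t] (s : Fin t → ℤ) : Prop :=
  (∀ j, 0 ≤ s j ∧ s j ≤ 2 * m - 1) ∧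
  (∀ j, 0 ≤ lamOf p t d s j ∧ lamOf p t d s j ≤ 2 * m * ((p : ℤ) - 1))

/-- Membership in `H`: `1 ≤ s_j ≤ 2m−1` and `0 ≤ p·s_{j+1} − s_j ≤ 2m(p−1)`. -/
def memH (p t m : ℕ) [NeZero t] (s : Fin t → ℤ) : Prop :=
  (∀ j, 1 ≤ s j ∧ s j ≤ 2 * m - 1) ∧
  (∀ j, 0 ≤ lamOf p t 0 s j ∧ lamOf p t 0 s j ≤ 2 * m * ((p : ℤ) - 1))

/-- `J(s) = {j : λ_j = m(p−1)}`. -/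
def Jset (p t m d : ℕ) [NeZero t] (s : Fin t → ℤ) : Finset (Fin t) :=
  Finset.univ.filter (fun j => lamOf p t d s j = m * ((p : ℤ) - 1))

/-- Membership in `S[d]`: `s ∈ H[d]` and `ε ⊆ J(s)`. -/
def memSd (p t m d : ℕ) [NeZero t] (s : Fin t → ℤ) (eps : Finset (Fin t)) : Prop :=
  memHd p t m d s ∧ eps ⊆ Jset p t m d s

/-- Membership in `S`: `s ∈ H` and `ε ⊆ J(s)` (with `d = 0`). -/
def memS (p t m : ℕ) [NeZero t] (s : Fin t → ℤ) (eps : Finset (Fin t)) : Prop :=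
  memH p t m s ∧ eps ⊆ Jset p t m 0 s

/-- `Z(s',s) = {j : s'_j = s_j, s'_{j+1} = s_{j+1}, λ'_j = m(p−1)}`. -/
def Zset (p t m d : ℕ) [NeZero t] (s' s : Fin t → ℤ) : Finset (Fin t) :=
  Finset.univ.filter (fun j =>
    s' j = s j ∧ s' (j + 1) = s (j + 1) ∧ lamOf p t d s' j = m * ((p : ℤ) - 1))

/-- The order on `S[d]` (and `S`): `(s',ε') ≤ (s,ε)` iff `s' ≤ s` pointwise and
`ε ∩ Z(s',s) = ε' ∩ Z(s',s)`. -/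
def leSd (p t m d : ℕ) [NeZero t] (s' : Fin t → ℤ) (eps' : Finset (Fin t))
    (s : Fin t → ℤ) (eps : Finset (Fin t)) : Prop :=
  (∀ j, s' j ≤ s j) ∧ eps ∩ Zset p t m d s' s = eps' ∩ Zset p t m d s' s


lemma Zeq_aux (p t m d : ℕ) [NeZero t] (s'' s' s : Fin t → ℤ)
    (h1 : ∀ j, s'' j ≤ s' j) (h2 : ∀ j, s' j ≤ s j) :
    Zset p t m d s'' s = Zset p t m d s'' s' ∩ Zset p t m d s' s := by
  ext j
  simp only [Zset, Finset.mem_inter, Finset.mem_filter, Finset.mem_univ, true_and]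
  constructor
  · rintro ⟨ha, hb, hc⟩
    have e1 : s'' j = s' j := le_antisymm (h1 j) (ha ▸ h2 j)
    have e2 : s'' (j + 1) = s' (j + 1) := le_antisymm (h1 _) (hb ▸ h2 _)
    have hl : lamOf p t d s' j = m * ((p : ℤ) - 1) := by
      unfold lamOf at hc ⊢; rw [← e1, ← e2]; exact hc
    exact ⟨⟨e1, e2, hc⟩, e1 ▸ ha, e2 ▸ hb, hl⟩
  · rintro ⟨⟨a1, a2, a3⟩, b1, b2, _⟩
    exact ⟨a1.trans b1, a2.trans b2, a3⟩

lemma Zself_aux (p t m d : ℕ) [NeZero t] (s : Fin t → ℤ) (eps : Finset (Fin t))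
    (h : eps ⊆ Jset p t m d s) : eps ∩ Zset p t m d s s = eps := by
  ext j
  simp only [Finset.mem_inter, Zset, Finset.mem_filter, Finset.mem_univ, true_and,
    and_iff_left_iff_imp]
  intro hj
  have := h hj
  simp only [Jset, Finset.mem_filter, Finset.mem_univ, true_and] at this
  exact this

/-- (i) For `s'' ≤ s' ≤ s` in `H[d]`, `Z(s'',s) = Z(s'',s') ∩ Z(s',s)`.
(ii) The relation `≤` is a partial order on `S[d]`. -/
theorem Sd_partial_order (p t m d : ℕ) [Fact p.Prime] [NeZero t]
    (hodd : Odd p) (ht : 1 < t) (hm : 2 ≤ m) (hd : d ≤ p ^ t - 2) :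
    (∀ s'' s' s : Fin t → ℤ, memHd p t m d s'' → memHd p t m d s' → memHd p t m d s →
      (∀ j, s'' j ≤ s' j) → (∀ j, s' j ≤ s j) →
      Zset p t m d s'' s = Zset p t m d s'' s' ∩ Zset p t m d s' s)
    ∧ (∀ s eps, memSd p t m d s eps → leSd p t m d s eps s eps)
    ∧ (∀ s' eps' s eps, memSd p t m d s' eps' → memSd p t m d s eps →
        leSd p t m d s' eps' s eps → leSd p t m d s eps s' eps' →
        s' = s ∧ eps' = eps)
    ∧ (∀ s'' eps'' s' eps' s eps,
        memSd p t m d s'' eps'' → memSd p t m d s' eps' → memSd p t m d s eps →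
        leSd p t m d s'' eps'' s' eps' → leSd p t m d s' eps' s eps →
        leSd p t m d s'' eps'' s eps) := by
  refine ⟨fun s'' s' s _ _ _ h1 h2 => Zeq_aux p t m d s'' s' s h1 h2,
    fun s eps _ => ⟨fun j => le_refl _, rfl⟩, ?_, ?_⟩
  · rintro s' eps' s eps ⟨_, hsub'⟩ ⟨_, hsub⟩ hle hge
    have hs : s' = s := funext fun j => le_antisymm (hle.1 j) (hge.1 j)
    subst hs
    refine ⟨rfl, ?_⟩
    have h1 := hle.2
    rw [Zself_aux p t m d s' eps hsub, Zself_aux p t m d s' eps' hsub'] at h1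
    exact h1.symm
  · rintro s'' eps'' s' eps' s eps _ _ _ ⟨hab1, hab2⟩ ⟨hbc1, hbc2⟩
    refine ⟨fun j => (hab1 j).trans (hbc1 j), ?_⟩
    rw [Zeq_aux p t m d s'' s' s hab1 hbc1]
    ext j
    simp only [Finset.mem_inter] at *
    have h2 : j ∈ Zset p t m d s' s → (j ∈ eps ↔ j ∈ eps') := by
      intro hz
      have := Finset.ext_iff.1 hbc2 j
      simp only [Finset.mem_inter] at this
      constructor
      · intro he; exact ((this.1 ⟨he, hz⟩).1)
      · intro he; exact ((this.2 ⟨he, hz⟩).1)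
    have h3 : j ∈ Zset p t m d s'' s' → (j ∈ eps' ↔ j ∈ eps'') := by
      intro hz
      have := Finset.ext_iff.1 hab2 j
      simp only [Finset.mem_inter] at this
      constructor
      · intro he; exact ((this.1 ⟨he, hz⟩).1)
      · intro he; exact ((this.2 ⟨he, hz⟩).1)
    constructor
    · rintro ⟨he, hz1, hz2⟩
      exact ⟨(h3 hz1).1 ((h2 hz2).1 he), hz1, hz2⟩
    · rintro ⟨he, hz1, hz2⟩
      exact ⟨(h2 hz2).2 ((h3 hz1).2 he), hz1, hz2⟩


end
end
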